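/- Let T be a tournament and R1, R2 disjoint subsets of V(T) such that the directed domination graph of T[R1] is nonempty (has at least one arc) and the directed domination graph of T[R2] contains a directed cycle. Then R1 and R2 cannot both be minimal τ-retentive sets of T. -/

import Mathlib

variable {V : Type}

/-- Inneighbors of `v` inside the subtournament on `s` (excluding `v` itself). -/
def inn [DecidableEq V] (r : V → V → Prop) [DecidableRel r] (s : Finset V) (v : V) :
    Finset V :=
  (s.filter fun u => r u v).erase v

lemma inn_card_lt [DecidableEq V] (r : V → V → Prop) [DecidableRel r]
    (s : Finset V) (v : V) (hv : v ∈ s) : (inn r s v).card < s.card := by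
  have h1 : inn r s v ⊆ s.erase v := by
    intro x hx
    rcases Finset.mem_erase.mp hx with ⟨hxv, hx2⟩
    exact Finset.mem_erase.mpr ⟨hxv, (Finset.mem_filter.mp hx2).1⟩
  calc (inn r s v).card ≤ (s.erase v).card := Finset.card_le_card h1
    _ < s.card := Finset.card_erase_lt_of_mem hv

/-- The tournament equilibrium set of the subtournament of `r` on `s`:
the union of all minimal τ-retentive sets. -/
def tau [DecidableEq V] (r : V → V → Prop) [DecidableRel r] (s : Finset V) : Set V :=
  {x | ∃ A : Finset V, x ∈ A ∧ A ⊆ s ∧ A.Nonempty ∧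
    (∀ v, v ∈ s → v ∈ A → ((inn r s v).Nonempty → tau r (inn r s v) ⊆ ↑A)) ∧
    ∀ B : Finset V, B ⊆ s → B ⊂ A →
      ¬ (B.Nonempty ∧
        ∀ v, v ∈ s → v ∈ B → ((inn r s v).Nonempty → tau r (inn r s v) ⊆ ↑B))}
termination_by s.card
decreasing_by
  all_goals exact inn_card_lt r s v (by assumption)

/-- `A` is a τ-retentive set of the tournament on `s`. -/
def Retentive [DecidableEq V] (r : V → V → Prop) [DecidableRel r] (s A : Finset V) : Prop :=
  A ⊆ s ∧ A.Nonempty ∧ ∀ v ∈ A, (inn r s v).Nonempty → tau r (inn r s v) ⊆ ↑A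

/-- `A` is a minimal τ-retentive set of the tournament on `s`. -/
def MinRetentive [DecidableEq V] (r : V → V → Prop) [DecidableRel r] (s A : Finset V) : Prop :=
  Retentive r s A ∧ ∀ B, Retentive r s B → B ⊆ A → B = A

/-- `r` is a tournament on the vertex set `s`. -/
def IsTournament (r : V → V → Prop) (s : Finset V) : Prop :=
  (∀ v ∈ s, ¬ r v v) ∧ ∀ u ∈ s, ∀ v ∈ s, u ≠ v → (r u v ↔ ¬ r v u)

/-- `u` is the captain of `v` in the subtournament on `s`:
`u` dominates `v` and all other inneighbors of `v`. -/
def IsCaptain (r : V → V → Prop) (s : Finset V) (u v : V) : Prop :=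
  u ∈ s ∧ v ∈ s ∧ r u v ∧ ∀ w ∈ s, w ≠ u → r w v → r u w

/-- The (undirected) domination graph of the subtournament on `s`. -/
def domGraph (r : V → V → Prop) (s : Finset V) : SimpleGraph V where
  Adj u v := (IsCaptain r s u v ∨ IsCaptain r s v u) ∧ u ≠ v
  symm := by
    constructor
    intro u v h
    exact ⟨h.1.symm, h.2.symm⟩
  loopless := by
    constructor
    intro u h
    exact h.2 rfl

/-! A captain inside a retentive set `R` is a captain of the whole tournament: if `u` is the
captain of `v` in `R`, some minimal retentive set of the inneighbourhood of `v` lies in `R`; it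
must contain `u`, since a retentive set keeps every vertex dominating it, and then `u` cannot
have inneighbours there. So the arc and the cycle both live in the domination graph of `T`.
There a captain cycle is odd, since each of its vertices beats those an odd number of steps
ahead; but off the cycle the captain `u` of `v` forces "beats `v`" to alternate along it. -/

section Retentive

variable [DecidableEq V] {r : V → V → Prop} [DecidableRel r]

lemma mem_inn {X : Finset V} {u v : V} : u ∈ inn r X v ↔ u ≠ v ∧ u ∈ X ∧ r u v := by
  simp [inn]

lemma inn_subset (X : Finset V) (v : V) : inn r X v ⊆ X :=
  fun _ hu => (mem_inn.1 hu).2.1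

lemma inn_ssubset {X : Finset V} {v : V} (hv : v ∈ X) : inn r X v ⊂ X :=
  (Finset.subset_erase.2 ⟨inn_subset X v, fun h => (mem_inn.1 h).1 rfl⟩).trans_ssubset
    (Finset.erase_ssubset hv)

lemma tau_subset (X : Finset V) : tau r X ⊆ X := by
  intro x hx
  rw [tau] at hx
  obtain ⟨A, hxA, hAX, -⟩ := hx
  exact hAX hxA

lemma MinRetentive.coe_subset_tau {X A : Finset V} (hA : MinRetentive r X A) :
    (A : Set V) ⊆ tau r X := by
  obtain ⟨⟨hAX, hAne, hAcl⟩, hmin⟩ := hA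
  intro x hx
  rw [tau]
  refine ⟨A, hx, hAX, hAne, fun v _ hv => hAcl v hv, fun B hBX hBA ⟨hBne, hBcl⟩ => ?_⟩
  exact hBA.ne (hmin B ⟨hBX, hBne, fun v hv => hBcl v (hBX hv) hv⟩ hBA.subset)

lemma Retentive.exists_minRetentive_subset {X A : Finset V} (hA : Retentive r X A) :
    ∃ B ⊆ A, MinRetentive r X B := by
  obtain ⟨B, hBA, hB⟩ := exists_minimal_le_of_wellFoundedLT (Retentive r X) A hA
  exact ⟨B, hBA, hB.1, fun C hC hCB => le_antisymm hCB (hB.2 hC hCB)⟩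

lemma retentive_self {X : Finset V} (hX : X.Nonempty) : Retentive r X X :=
  ⟨subset_rfl, hX, fun v _ _ => (tau_subset _).trans (Finset.coe_subset.2 (inn_subset X v))⟩

lemma tau_nonempty {X : Finset V} (hX : X.Nonempty) : (tau r X).Nonempty := by
  obtain ⟨A, -, hA⟩ := (retentive_self hX).exists_minRetentive_subset (r := r)
  obtain ⟨x, hx⟩ := hA.1.2.1
  exact ⟨x, hA.coe_subset_tau hx⟩

lemma Retentive.exists_minRetentive_inn_subset {X A : Finset V} {v : V}
    (hA : Retentive r X A) (hv : v ∈ A) (hinn : (inn r X v).Nonempty) :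
    ∃ B, MinRetentive r (inn r X v) B ∧ B ⊆ A := by
  obtain ⟨B, -, hB⟩ := (retentive_self hinn).exists_minRetentive_subset (r := r)
  exact ⟨B, hB, fun x hx => hA.2.2 v hv hinn (hB.coe_subset_tau hx)⟩

lemma Retentive.mem_of_dominates {X A : Finset V} {u : V} (hA : Retentive r X A) (hu : u ∈ X)
    (hdom : ∀ w ∈ A, w ≠ u → r u w) : u ∈ A := by
  induction X using Finset.strongInduction generalizing A with
  | H X ih =>
  obtain ⟨v, hv⟩ := hA.2.1
  by_cases hvu : v = u
  · exact hvu ▸ hv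
  have huv : u ∈ inn r X v := mem_inn.2 ⟨Ne.symm hvu, hu, hdom v hv hvu⟩
  obtain ⟨B, hB, hBA⟩ := hA.exists_minRetentive_inn_subset hv ⟨u, huv⟩
  exact hBA (ih _ (inn_ssubset (hA.1 hv)) hB.1 huv fun w hw => hdom w (hBA hw))

end Retentive

section Tournament

variable {r : V → V → Prop} {s : Finset V}

lemma IsTournament.asymm (hT : IsTournament r s) {a b : V} (ha : a ∈ s) (hb : b ∈ s)
    (hab : r a b) : ¬ r b a := by
  rcases eq_or_ne a b with rfl | hne
  · exact absurd hab (hT.1 a ha)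
  · exact (hT.2 a ha b hb hne).1 hab

lemma IsTournament.rel_of_not_rel (hT : IsTournament r s) {a b : V} (ha : a ∈ s) (hb : b ∈ s)
    (hne : a ≠ b) (h : ¬ r a b) : r b a :=
  (hT.2 b hb a ha hne.symm).2 h

lemma IsTournament.mono (hT : IsTournament r s) {t : Finset V} (hts : t ⊆ s) :
    IsTournament r t :=
  ⟨fun v hv => hT.1 v (hts hv), fun u hu v hv => hT.2 u (hts hu) v (hts hv)⟩

lemma IsCaptain.rel_of_rel_captain (hT : IsTournament r s) {u v w : V} (h : IsCaptain r s u v)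
    (hw : w ∈ s) (hwu : w ≠ u) (hwv : w ≠ v) (hwu' : r w u) : r v w :=
  hT.rel_of_not_rel hw h.2.1 hwv fun hwv' => hT.asymm hw h.1 hwu' (h.2.2.2 w hw hwu hwv')

lemma Retentive.inn_eq_empty_of_dominates [DecidableEq V] [DecidableRel r] {A : Finset V}
    {u : V} (hT : IsTournament r s) (hA : Retentive r s A) (hu : u ∈ s)
    (hdom : ∀ w ∈ A, w ≠ u → r u w) : inn r s u = ∅ := by
  have huA := hA.mem_of_dominates hu hdom
  by_contra hne
  have hinn := Finset.nonempty_iff_ne_empty.2 hne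
  obtain ⟨x, hx⟩ := tau_nonempty hinn (r := r)
  obtain ⟨hxu, hxs, hxu'⟩ := mem_inn.1 (tau_subset _ hx)
  exact hT.asymm hxs hu hxu' (hdom x (hA.2.2 u huA hinn hx) hxu)

lemma IsCaptain.of_retentive [DecidableEq V] [DecidableRel r] {R : Finset V} {u v : V}
    (hT : IsTournament r s) (hR : Retentive r s R) (h : IsCaptain r R u v) :
    IsCaptain r s u v := by
  obtain ⟨huR, hvR, huv, hcap⟩ := h
  have hus := hR.1 huR
  have hvs := hR.1 hvR
  have hu : u ∈ inn r s v := mem_inn.2 ⟨fun h => hT.1 u hus (h ▸ huv), hus, huv⟩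
  obtain ⟨A, hA, hAR⟩ := hR.exists_minRetentive_inn_subset hvR ⟨u, hu⟩
  have hsrc : inn r (inn r s v) u = ∅ :=
    hA.1.inn_eq_empty_of_dominates (hT.mono (inn_subset s v)) hu
      fun w hw hwu => hcap w (hAR hw) hwu (mem_inn.1 (hA.1.1 hw)).2.2
  refine ⟨hus, hvs, huv, fun w hws hwu hwv => hT.rel_of_not_rel hws hus hwu fun hwu' => ?_⟩
  have hw : w ∈ inn r s v := mem_inn.2 ⟨fun h => hT.1 v hvs (h ▸ hwv), hws, hwv⟩
  simpa [hsrc] using mem_inn.2 ⟨hwu, hw, hwu'⟩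

end Tournament

lemma iff_even_of_alternating {p : ℕ → Prop} (h : ∀ k, p (k + 1) ↔ ¬ p k) (k : ℕ) :
    p k ↔ (p 0 ↔ Even k) := by
  induction k with
  | zero => simp
  | succ k ih => rw [h, ih, Nat.even_add_one]; tauto

section CaptainCycle

variable {r : V → V → Prop} {s : Finset V} {d : ℕ → V} {n : ℕ}

lemma captain_cycle_rel_add_odd (hT : IsTournament r s)
    (hcap : ∀ k, IsCaptain r s (d k) (d (k + 1)))
    (hne : ∀ k j, 0 < j → j < n → d (k + j) ≠ d k) :
    ∀ j, 2 * j + 1 < n → ∀ k, r (d k) (d (k + (2 * j + 1))) := by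
  intro j
  induction j with
  | zero => intro _ k; exact (hcap k).2.2.1
  | succ j ih =>
    intro hj k
    have hfar : r (d (k + 1 + (2 * j + 1) + 1)) (d (k + 1)) :=
      (hcap _).rel_of_rel_captain hT (hcap _).1 (hne _ _ (by omega) (by omega)).symm
        (by simpa [add_assoc] using (hne (k + 1) (2 * j + 2) (by omega) (by omega)).symm)
        (ih (by omega) (k + 1))
    have e : k + 1 + (2 * j + 1) + 1 = k + (2 * (j + 1) + 1) := by ring
    rw [e] at hfar
    exact (hcap k).2.2.2 _ (hcap _).1 (hne _ _ (by omega) hj) hfar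

lemma odd_of_captain_cycle (hT : IsTournament r s)
    (hcap : ∀ k, IsCaptain r s (d k) (d (k + 1))) (hper : Function.Periodic d n)
    (hne : ∀ k j, 0 < j → j < n → d (k + j) ≠ d k) (hn : 0 < n) : Odd n := by
  by_contra hodd
  obtain ⟨j, rfl⟩ : ∃ j, n = 2 * j + 2 := by
    obtain ⟨m, hm⟩ := Nat.not_odd_iff_even.1 hodd
    exact ⟨m - 1, by omega⟩
  have hback := captain_cycle_rel_add_odd hT hcap hne j (by omega) 1
  rw [show 1 + (2 * j + 1) = 0 + (2 * j + 2) by ring, hper] at hback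
  exact hT.asymm (hcap 0).1 (hcap 0).2.1 (hcap 0).2.2.1 hback

lemma captain_cycle_rel_alternating (hT : IsTournament r s)
    (hcap : ∀ k, IsCaptain r s (d k) (d (k + 1))) {u v : V} (huv : IsCaptain r s u v)
    (hu : ∀ k, d k ≠ u) (hv : ∀ k, d k ≠ v) (k : ℕ) :
    r (d (k + 1)) v ↔ ¬ r (d k) v := by
  constructor
  · intro hk1 hk
    exact hT.asymm huv.1 (hcap k).1 (huv.2.2.2 _ (hcap k).1 (hu k) hk)
      ((hcap k).2.2.2 u huv.1 (hu k).symm (huv.2.2.2 _ (hcap _).1 (hu _) hk1))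
  · intro hk
    by_contra hk1
    exact hk ((hcap k).2.2.2 v huv.2.1 (hv k).symm
      (hT.rel_of_not_rel (hcap _).1 huv.2.1 (hv _) hk1))

lemma captain_cycle_not_odd_of_captain (hT : IsTournament r s)
    (hcap : ∀ k, IsCaptain r s (d k) (d (k + 1))) (hper : Function.Periodic d n)
    (hodd : Odd n) {u v : V} (huv : IsCaptain r s u v) (hu : ∀ k, d k ≠ u)
    (hv : ∀ k, d k ≠ v) : False := by
  have h := iff_even_of_alternating (p := fun k => r (d k) v)
    (captain_cycle_rel_alternating hT hcap huv hu hv) n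
  rw [show n = 0 + n by simp, hper] at h
  simp [Nat.not_even_iff_odd.2 hodd] at h

end CaptainCycle

def cycleSeq {n : ℕ} (hn : 0 < n) (c : Fin n → V) (k : ℕ) : V :=
  c ⟨k % n, Nat.mod_lt _ hn⟩

section CycleSeq

variable {n : ℕ} (hn : 0 < n)

lemma cycleSeq_periodic (c : Fin n → V) : Function.Periodic (cycleSeq hn c) n := by
  intro k
  simp [cycleSeq]

lemma cycleSeq_add_ne {c : Fin n → V} (hinj : Function.Injective c) (k j : ℕ) (hj : 0 < j) (hjn : j < n) :
    cycleSeq hn c (k + j) ≠ cycleSeq hn c k := by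
  intro h
  have hmod : k + j ≡ k + 0 [MOD n] := Fin.val_eq_of_eq (hinj h)
  have := Nat.ModEq.add_left_cancel' k hmod
  rw [Nat.ModEq, Nat.mod_eq_of_lt hjn, Nat.zero_mod] at this
  omega

lemma cycleSeq_captain {c : Fin n → V} {r : V → V → Prop} {R : Finset V}
    (hcyc : ∀ i : Fin n, IsCaptain r R (c i) (c ⟨(i.val + 1) % n, Nat.mod_lt _ hn⟩)) (k : ℕ) :
    IsCaptain r R (cycleSeq hn c k) (cycleSeq hn c (k + 1)) := by
  simpa [cycleSeq, Nat.add_mod] using hcyc ⟨k % n, Nat.mod_lt _ hn⟩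

end CycleSeq

theorem stmt16_general [DecidableEq V] (r : V → V → Prop) [DecidableRel r] (s : Finset V)
    (hT : IsTournament r s) (R1 R2 : Finset V)
    (hd : Disjoint R1 R2)
    (harc : ∃ u v, IsCaptain r R1 u v)
    (n : ℕ) (hn : 0 < n) (c : Fin n → V) (hinj : Function.Injective c)
    (hcyc : ∀ i : Fin n, IsCaptain r R2 (c i) (c ⟨(i.val + 1) % n, Nat.mod_lt _ hn⟩)) :
    ¬ (MinRetentive r s R1 ∧ MinRetentive r s R2) := by
  rintro ⟨⟨hR1, -⟩, ⟨hR2, -⟩⟩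
  obtain ⟨u, v, huv⟩ := harc
  have hcapR2 := cycleSeq_captain hn hcyc
  have hcap k := (hcapR2 k).of_retentive hT hR2
  have hoff : ∀ x ∈ R1, ∀ k, cycleSeq hn c k ≠ x := fun x hx k hkx =>
    Finset.disjoint_left.1 hd hx (hkx ▸ (hcapR2 k).1)
  have hper := cycleSeq_periodic hn c
  have hodd := odd_of_captain_cycle hT hcap hper (cycleSeq_add_ne hn hinj) hn
  exact captain_cycle_not_odd_of_captain hT hcap hper hodd (huv.of_retentive hT hR1)
    (hoff u huv.1) (hoff v huv.2.1)

theorem stmt16 [DecidableEq V] (r : V → V → Prop) [DecidableRel r] (s : Finset V)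
    (hT : IsTournament r s) (R1 R2 : Finset V) (h1s : R1 ⊆ s) (h2s : R2 ⊆ s)
    (hd : Disjoint R1 R2)
    (harc : ∃ u v, IsCaptain r R1 u v)
    (n : ℕ) (hn : 0 < n) (c : Fin n → V) (hinj : Function.Injective c)
    (hcyc : ∀ i : Fin n, IsCaptain r R2 (c i) (c ⟨(i.val + 1) % n, Nat.mod_lt _ hn⟩)) :
    ¬ (MinRetentive r s R1 ∧ MinRetentive r s R2) :=
  stmt16_general r s hT R1 R2 hd harc n hn c hinj hcyc
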